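/- In the N-player oligopoly with all δ = 0, the unique Nash equilibrium is x* = -𝒬^{-1}ℬ, and it exists (𝒬 is invertible) by strict diagonal dominance of 𝒬. -/

import Mathlib

/-!
Player `i`'s cost is a strictly convex quadratic in its own strategy `x i`, so the best-response
condition is the vanishing of its derivative, which is exactly row `i` of `𝒬 x + ℬ = 0`. The
off-diagonal entries of row `i` of `𝒬` sum in absolute value to `R_∥ / (R_i R̄_i)`, half the
diagonal entry, so `𝒬` is strictly diagonally dominant and hence invertible.
-/

open Finset Matrix

theorem quadratic_min_iff {a b c t₀ : ℝ} (ha : 0 < a) :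
    (∀ t, a * t₀ ^ 2 + b * t₀ + c ≤ a * t ^ 2 + b * t + c) ↔ 2 * a * t₀ + b = 0 := by
  constructor
  · intro h
    have hvertex : a * t₀ ^ 2 + b * t₀ + c - (a * (-b / (2 * a)) ^ 2 + b * (-b / (2 * a)) + c)
        = (2 * a * t₀ + b) ^ 2 / (4 * a) := by
      field_simp
      ring
    have hgap : (2 * a * t₀ + b) ^ 2 / (4 * a) ≤ 0 := hvertex ▸ sub_nonpos.mpr (h _)
    rw [div_le_iff₀ (by positivity), zero_mul] at hgap
    exact sq_nonpos_iff _ |>.mp hgap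
  · intro h t
    obtain rfl : b = -(2 * a * t₀) := by linarith
    nlinarith [mul_nonneg ha.le (sq_nonneg (t - t₀))]

section Nash

variable {ι : Type*}

def IsNashEquilibrium [DecidableEq ι] (J : ι → (ι → ℝ) → ℝ) (x : ι → ℝ) : Prop :=
  ∀ i t, J i x ≤ J i (Function.update x i t)

theorem isNashEquilibrium_iff_eq_neg_inv_mulVec [Fintype ι] [DecidableEq ι]
    {J : ι → (ι → ℝ) → ℝ} {Q : Matrix ι ι ℝ} {B : ι → ℝ} (hQ : IsUnit Q.det)
    (hJ : ∀ x i, (∀ t, J i x ≤ J i (Function.update x i t)) ↔ (Q *ᵥ x + B) i = 0)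
    (x : ι → ℝ) : IsNashEquilibrium J x ↔ x = -(Q⁻¹ *ᵥ B) := by
  have hlin : IsNashEquilibrium J x ↔ Q *ᵥ x + B = 0 := by
    simp only [IsNashEquilibrium, hJ, funext_iff, Pi.zero_apply]
  rw [hlin, add_eq_zero_iff_eq_neg]
  constructor
  · intro h
    rw [← one_mulVec x, ← nonsing_inv_mul Q hQ, ← mulVec_mulVec, h, mulVec_neg]
  · rintro rfl
    rw [mulVec_neg, mulVec_mulVec, mul_nonsing_inv Q hQ, one_mulVec]

end Nash

theorem pos_of_inv_eq_sum_inv {ι : Type*} {s : Finset ι} (hs : s.Nonempty) {R : ι → ℝ}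
    (hR : ∀ k, 0 < R k) {r : ℝ} (hr : r⁻¹ = ∑ k ∈ s, (R k)⁻¹) : 0 < r :=
  inv_pos.mp (hr ▸ sum_pos (fun k _ => inv_pos.mpr (hR k)) hs)

noncomputable section Oligopoly

variable {ι : Type*} [Fintype ι] [DecidableEq ι] {R : ι → ℝ} {Rpar : ℝ} {Rbar : ι → ℝ}

def oligopolyMatrix (R : ι → ℝ) (Rpar : ℝ) (Rbar : ι → ℝ) : Matrix ι ι ℝ :=
  of fun i j => if j = i then 2 * Rpar / (R i * Rbar i) else -Rpar / (R i * R j)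

theorem oligopolyMatrix_mulVec_apply (y : ι → ℝ) (i : ι) :
    (oligopolyMatrix R Rpar Rbar *ᵥ y) i
      = 2 * Rpar / (R i * Rbar i) * y i - Rpar / R i * ∑ j ∈ univ.erase i, y j / R j := by
  rw [mulVec, dotProduct, ← sum_erase_add _ _ (mem_univ i), mul_sum, sub_eq_neg_add,
    ← sum_neg_distrib]
  congr 1
  · refine sum_congr rfl fun j hj => ?_
    simp only [oligopolyMatrix, of_apply, if_neg (ne_of_mem_erase hj)]
    ring
  · simp [oligopolyMatrix]

theorem det_oligopolyMatrix_ne_zero (hR : ∀ k, 0 < R k) (hRpar : 0 < Rpar)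
    (hRbar_pos : ∀ i, 0 < Rbar i) (hRbar : ∀ i, (Rbar i)⁻¹ = ∑ k ∈ univ.erase i, (R k)⁻¹) :
    (oligopolyMatrix R Rpar Rbar).det ≠ 0 := by
  refine det_ne_zero_of_sum_row_lt_diag fun i => ?_
  have hhalf : 0 < Rpar / (R i * Rbar i) := div_pos hRpar (mul_pos (hR i) (hRbar_pos i))
  have hoff : ∑ j ∈ univ.erase i, ‖oligopolyMatrix R Rpar Rbar i j‖ = Rpar / (R i * Rbar i) := by
    rw [div_mul_eq_div_div, div_eq_mul_inv _ (Rbar i), hRbar, mul_sum]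
    refine sum_congr rfl fun j hj => ?_
    rw [oligopolyMatrix, of_apply, if_neg (ne_of_mem_erase hj), Real.norm_eq_abs, neg_div,
      abs_neg, abs_of_pos (div_pos hRpar (mul_pos (hR i) (hR j)))]
    ring
  have hdiag : oligopolyMatrix R Rpar Rbar i i = 2 * (Rpar / (R i * Rbar i)) := by
    rw [oligopolyMatrix, of_apply, if_pos rfl]
    ring
  rw [hoff, hdiag, Real.norm_eq_abs, abs_of_pos (by positivity)]
  linarith

theorem sum_erase_update_div (R : ι → ℝ) (y : ι → ℝ) (i : ι) (t : ℝ) :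
    ∑ j ∈ univ.erase i, Function.update y i t j / R j = ∑ j ∈ univ.erase i, y j / R j :=
  sum_congr rfl fun j hj => by rw [Function.update_of_ne (ne_of_mem_erase hj)]

theorem oligopoly_bestResponse_iff {J : ι → (ι → ℝ) → ℝ} {B : ι → ℝ} {Sd : ℝ} {m : ι → ℝ}
    {i : ι} (hR : 0 < R i) (hRpar : 0 < Rpar) (hRbar : 0 < Rbar i)
    (hJ : ∀ x, J i x =
      -((Rpar / R i) * (Sd - x i / Rbar i + ∑ j ∈ univ.erase i, x j / R j)) * (x i - m i))
    (hB : B i = -(m i) * Rpar / (R i * Rbar i) - Sd * Rpar / R i) (y : ι → ℝ) :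
    (∀ t, J i y ≤ J i (Function.update y i t)) ↔ (oligopolyMatrix R Rpar Rbar *ᵥ y + B) i = 0 := by
  set S := ∑ j ∈ univ.erase i, y j / R j
  set a := Rpar / (R i * Rbar i)
  set b := -(Rpar / R i) * (Sd + S) - a * m i
  set c := Rpar / R i * (Sd + S) * m i
  have hquad : ∀ t, J i (Function.update y i t) = a * t ^ 2 + b * t + c := fun t => by
    rw [hJ, sum_erase_update_div, Function.update_self]
    simp only [a, b, c, S]
    field_simp
    ring
  have hlin : (oligopolyMatrix R Rpar Rbar *ᵥ y + B) i = 2 * a * y i + b := by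
    rw [Pi.add_apply, oligopolyMatrix_mulVec_apply, hB]
    ring
  have ha : 0 < a := div_pos hRpar (mul_pos hR hRbar)
  rw [hlin, ← quadratic_min_iff (c := c) ha]
  simp only [← hquad, Function.update_eq_self]

end Oligopoly

/-- in the N-player oligopoly without deception (`δ = 0`), the matrix `𝒬`
is invertible and `x* = -𝒬⁻¹ℬ` is the unique Nash equilibrium of the game with costs
`J_i(x) = -s_i(x)(x_i - m_i)`. -/
theorem stmt_17 (N : ℕ) (hN : 2 ≤ N) (R : Fin N → ℝ) (hR : ∀ k, 0 < R k)
    (Rpar : ℝ) (hRpar : Rpar⁻¹ = ∑ k, (R k)⁻¹)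
    (Rbar : Fin N → ℝ)
    (hRbar : ∀ i, (Rbar i)⁻¹ = ∑ k ∈ Finset.univ.erase i, (R k)⁻¹)
    (Sd : ℝ) (m : Fin N → ℝ)
    (J : Fin N → (Fin N → ℝ) → ℝ)
    (hJ : ∀ i x, J i x =
      -((Rpar / R i) * (Sd - x i / Rbar i + ∑ j ∈ Finset.univ.erase i, x j / R j))
        * (x i - m i))
    (Q : Matrix (Fin N) (Fin N) ℝ) (B : Fin N → ℝ)
    (hQ : ∀ i j, Q i j =
      if j = i then 2 * Rpar / (R i * Rbar i) else -Rpar / (R i * R j))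
    (hB : ∀ i, B i = -(m i) * Rpar / (R i * Rbar i) - Sd * Rpar / R i) :
    IsUnit Q.det ∧
    (∀ i t, J i (-(Q⁻¹.mulVec B)) ≤ J i (Function.update (-(Q⁻¹.mulVec B)) i t)) ∧
    (∀ y : Fin N → ℝ,
      (∀ i t, J i y ≤ J i (Function.update y i t)) → y = -(Q⁻¹.mulVec B)) := by
  obtain rfl : Q = oligopolyMatrix R Rpar Rbar := Matrix.ext hQ
  have : Nontrivial (Fin N) := Fin.nontrivial_iff_two_le.mpr hN
  have hRpar_pos : 0 < Rpar := pos_of_inv_eq_sum_inv univ_nonempty hR hRpar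
  have hRbar_pos : ∀ i, 0 < Rbar i := fun i =>
    pos_of_inv_eq_sum_inv (univ_nontrivial_iff.mpr ‹_›).erase_nonempty hR (hRbar i)
  have hdet : IsUnit (oligopolyMatrix R Rpar Rbar).det :=
    (det_oligopolyMatrix_ne_zero hR hRpar_pos hRbar_pos hRbar).isUnit
  have hnash := isNashEquilibrium_iff_eq_neg_inv_mulVec hdet fun x i =>
    oligopoly_bestResponse_iff (hR i) hRpar_pos (hRbar_pos i) (hJ i) (hB i) x
  exact ⟨hdet, (hnash _).2 rfl, fun y hy => (hnash y).1 hy⟩
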